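/- Let g and h be finite-dimensional real Lie algebras with norms and let φ : g → h be a Lie algebra homomorphism. Then the induced group homomorphism P(g) → P(h), γ ↦ φ∘γ, maps the subgroup P(g)₀ into the subgroup P(h)₀, and therefore descends to a group homomorphism P(g)/P(g)₀ → P(h)/P(h)₀. -/

import Mathlib

/-- `IsLieBracket B` says that the bilinear map `B = ⁅·,·⁆` makes the
(finite-dimensional, normed) real vector space `g` into a real Lie algebra:
it is alternating and satisfies the Jacobi identity (in Leibniz form). -/
def IsLieBracket {g : Type*} [NormedAddCommGroup g] [NormedSpace ℝ g]
    (B : g →ₗ[ℝ] g →ₗ[ℝ] g) : Prop :=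
  (∀ x : g, B x x = 0) ∧
  (∀ x y z : g, B x (B y z) = B (B x y) z + B y (B x z))

/-- The adjoint endomorphism `ad x = ⁅x, ·⁆` as a continuous linear map. -/
noncomputable def adL {g : Type*} [NormedAddCommGroup g] [NormedSpace ℝ g]
    [FiniteDimensional ℝ g] (B : g →ₗ[ℝ] g →ₗ[ℝ] g) (x : g) : g →L[ℝ] g :=
  LinearMap.toContinuousLinearMap (B x)

/-- `IsTransport B γ A` says that `A : [0,1] → End(g)` is a continuously
differentiable path of linear endomorphisms of `g` with `A 0 = id` and
`A' t = ad (γ t) ∘ A t` for `t ∈ [0,1]` (one-sided derivatives at the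
endpoints, and the derivative is continuous on `[0,1]`). -/
def IsTransport {g : Type*} [NormedAddCommGroup g] [NormedSpace ℝ g]
    [FiniteDimensional ℝ g] (B : g →ₗ[ℝ] g →ₗ[ℝ] g)
    (γ : ℝ → g) (A : ℝ → (g →L[ℝ] g)) : Prop :=
  A 0 = 1 ∧
  (∀ t ∈ Set.Icc (0:ℝ) 1,
    HasDerivWithinAt A ((adL B (γ t)).comp (A t)) (Set.Icc (0:ℝ) 1) t) ∧
  ContinuousOn (fun t => (adL B (γ t)).comp (A t)) (Set.Icc (0:ℝ) 1)

/-- The path `A_γ : [0,1] → End(g)`, i.e. the unique continuously differentiable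
solution of `A 0 = id`, `A' t = ad (γ t) ∘ A t` (chosen via choice; for a
continuous path `γ` it exists and is unique on `[0,1]`). -/
noncomputable def transport {g : Type*} [NormedAddCommGroup g] [NormedSpace ℝ g]
    [FiniteDimensional ℝ g] (B : g →ₗ[ℝ] g →ₗ[ℝ] g) (γ : ℝ → g) :
    ℝ → (g →L[ℝ] g) :=
  letI := Classical.propDecidable (∃ A : ℝ → (g →L[ℝ] g), IsTransport B γ A)
  if h : ∃ A : ℝ → (g →L[ℝ] g), IsTransport B γ A then h.choose else fun _ => 1

/-- Extension of a continuous path `[0,1] → g` to all of `ℝ` (constant outside `[0,1]`). -/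
noncomputable def pathExt {g : Type*} [TopologicalSpace g]
    (γ : C(Set.Icc (0:ℝ) 1, g)) : ℝ → g :=
  Set.IccExtend zero_le_one ⇑γ

/-- The Duistermaat–Kolk multiplication of paths: `(γ · δ)(t) = γ t + A_γ(t) (δ t)`,
as a `g`-valued function on `[0,1]`. -/
noncomputable def pathMul {g : Type*} [NormedAddCommGroup g] [NormedSpace ℝ g]
    [FiniteDimensional ℝ g] (B : g →ₗ[ℝ] g →ₗ[ℝ] g)
    (γ δ : C(Set.Icc (0:ℝ) 1, g)) : Set.Icc (0:ℝ) 1 → g :=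
  fun t => γ t + transport B (pathExt γ) t (δ t)

/-- The Duistermaat–Kolk inversion of paths: `ι(γ)(t) = -A_γ(t)⁻¹ (γ t)`,
as a `g`-valued function on `[0,1]`. -/
noncomputable def pathInv {g : Type*} [NormedAddCommGroup g] [NormedSpace ℝ g]
    [FiniteDimensional ℝ g] (B : g →ₗ[ℝ] g →ₗ[ℝ] g)
    (γ : C(Set.Icc (0:ℝ) 1, g)) : Set.Icc (0:ℝ) 1 → g :=
  fun t => -(Ring.inverse (transport B (pathExt γ) t) (γ t))

/-- `InPathZero B γ` says that `γ` belongs to the subset `P(g)₀` of the path group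
`P(g) = C([0,1], g)`: there is a continuously differentiable family
`Γ : [0,1] → P(g)` (with derivative `Γ'`) joining the constant path `0` to `γ`
such that `∫₀¹ A_{Γ s}(t)⁻¹ (Γ' s (t)) dt = 0` for all `s ∈ [0,1]`. -/
noncomputable def InPathZero {g : Type*} [NormedAddCommGroup g] [NormedSpace ℝ g]
    [FiniteDimensional ℝ g] (B : g →ₗ[ℝ] g →ₗ[ℝ] g)
    (γ : C(Set.Icc (0:ℝ) 1, g)) : Prop :=
  ∃ Γ Γ' : ℝ → C(Set.Icc (0:ℝ) 1, g),
    (∀ s ∈ Set.Icc (0:ℝ) 1, HasDerivWithinAt Γ (Γ' s) (Set.Icc (0:ℝ) 1) s) ∧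
    ContinuousOn Γ' (Set.Icc (0:ℝ) 1) ∧
    Γ 0 = 0 ∧ Γ 1 = γ ∧
    ∀ s ∈ Set.Icc (0:ℝ) 1,
      (∫ t in (0:ℝ)..1,
        Ring.inverse (transport B (pathExt (Γ s)) t) (pathExt (Γ' s) t)) = 0

/-- The coset relation of the subgroup `P(g)₀` on the path group
`P(g) = C([0,1], g)`: `γ ∼ δ` iff `γ · ι(δ) ∈ P(g)₀`. -/
noncomputable def pathRel {g : Type*} [NormedAddCommGroup g] [NormedSpace ℝ g]
    [FiniteDimensional ℝ g] (B : g →ₗ[ℝ] g →ₗ[ℝ] g)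
    (γ δ : C(Set.Icc (0:ℝ) 1, g)) : Prop :=
  ∃ ι m : C(Set.Icc (0:ℝ) 1, g),
    (∀ t, ι t = pathInv B δ t) ∧ (∀ t, m t = pathMul B γ ι t) ∧ InPathZero B m

/-- The map `P(g) → P(h)` induced by a linear map `φ : g → h`, `γ ↦ φ ∘ γ`. -/
noncomputable def pathMap {g h : Type*}
    [NormedAddCommGroup g] [NormedSpace ℝ g] [FiniteDimensional ℝ g]
    [NormedAddCommGroup h] [NormedSpace ℝ h] [FiniteDimensional ℝ h]
    (φ : g →ₗ[ℝ] h) (γ : C(Set.Icc (0:ℝ) 1, g)) : C(Set.Icc (0:ℝ) 1, h) :=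
  ContinuousMap.comp
    ⟨fun x => φ x, (LinearMap.toContinuousLinearMap φ).continuous⟩ γ

/-!
A Lie algebra homomorphism intertwines the adjoint actions, `φ ∘ ad x = ad (φ x) ∘ φ`, so
`φ ∘ A_γ` and `A_{φ∘γ} ∘ φ` solve the same linear ODE with the same initial value `φ` and
therefore coincide; the same intertwining then holds for the inverses. Consequently the
continuous linear map `γ ↦ φ ∘ γ` carries the group law, the inversion and the integral
condition defining `P(g)₀` (pull `φ` out of the integral) to those of `h`.

The transports exist on all of `[0,1]` because the equation is linear: Picard–Lindelöf gives
solutions on pieces of length `1/(2K)`, where `K` bounds the coefficient, and these are glued.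
-/

open Set
open scoped NNReal

instance ContinuousLinearMap.isDedekindFiniteMonoid {𝕜 E : Type*} [NontriviallyNormedField 𝕜]
    [CompleteSpace 𝕜] [NormedAddCommGroup E] [NormedSpace 𝕜 E] [FiniteDimensional 𝕜 E] :
    IsDedekindFiniteMonoid (E →L[𝕜] E) :=
  IsDedekindFiniteMonoid.of_injective (Module.End.toContinuousLinearMap E).symm
    (Module.End.toContinuousLinearMap E).symm.injective

theorem IsCompact.exists_nnnorm_bound_of_continuousOn {α F : Type*} [TopologicalSpace α]
    [SeminormedAddGroup F] {s : Set α} (hs : IsCompact s) {f : α → F} (hf : ContinuousOn f s) :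
    ∃ K : ℝ≥0, ∀ x ∈ s, ‖f x‖₊ ≤ K := by
  obtain ⟨C, hC⟩ := hs.exists_bound_of_continuousOn hf
  refine ⟨C.toNNReal, fun x hx ↦ ?_⟩
  rw [← NNReal.coe_le_coe, coe_nnnorm, Real.coe_toNNReal']
  exact (hC x hx).trans (le_max_left _ _)

section LinearODE

variable {E : Type*} [NormedAddCommGroup E] [NormedSpace ℝ E] {a b : ℝ}

theorem HasDerivWithinAt.Ici_of_Icc {f : ℝ → E} {f' : E} {t : ℝ}
    (h : HasDerivWithinAt f f' (Icc a b) t) (ht : t ∈ Ico a b) :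
    HasDerivWithinAt f f' (Ici t) t :=
  h.mono_of_mem_nhdsWithin <|
    Filter.mem_of_superset (Icc_mem_nhdsGE ht.2) (Icc_subset_Icc_left ht.1)

theorem hasDerivWithinAt_Icc_of_eqOn {v : ℝ → E → E} {f F : ℝ → E} {t : ℝ}
    (hF : ∀ t ∈ Icc a b, HasDerivWithinAt F (v t (F t)) (Icc a b) t)
    (hfF : EqOn f F (Icc a b)) : HasDerivWithinAt f (v t (f t)) (Icc a b) t := by
  by_cases ht : t ∈ Icc a b
  · rw [hfF ht]
    exact (hF t ht).congr_of_mem hfF ht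
  · exact HasFDerivWithinAt.of_notMem_closure (by rwa [closure_Icc])

theorem exists_hasDerivWithinAt_Icc_of_glue {v : ℝ → E → E} {c : ℝ} (hac : a ≤ c) (hcb : c ≤ b)
    {f₁ f₂ : ℝ → E}
    (hf₁ : ∀ t ∈ Icc a c, HasDerivWithinAt f₁ (v t (f₁ t)) (Icc a c) t)
    (hf₂ : ∀ t ∈ Icc c b, HasDerivWithinAt f₂ (v t (f₂ t)) (Icc c b) t)
    (hc : f₁ c = f₂ c) :
    ∃ f : ℝ → E, f a = f₁ a ∧ ∀ t ∈ Icc a b, HasDerivWithinAt f (v t (f t)) (Icc a b) t := by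
  classical
  let f : ℝ → E := fun s ↦ if s ≤ c then f₁ s else f₂ s
  have hf₁f : EqOn f f₁ (Icc a c) := fun s hs ↦ if_pos hs.2
  have hf₂f : EqOn f f₂ (Icc c b) := fun s hs ↦ by
    rcases hs.1.eq_or_lt with rfl | hlt
    · simp [f, hc]
    · exact if_neg hlt.not_ge
  refine ⟨f, hf₁f ⟨le_rfl, hac⟩, fun t _ ↦ ?_⟩
  rw [← Icc_union_Icc_eq_Icc hac hcb]
  exact (hasDerivWithinAt_Icc_of_eqOn hf₁ hf₁f).union (hasDerivWithinAt_Icc_of_eqOn hf₂ hf₂f)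

variable {M : ℝ → E →L[ℝ] E}

theorem eqOn_of_linearODE (hM : ContinuousOn M (Icc a b)) {f₁ f₂ : ℝ → E}
    (hf₁ : ∀ t ∈ Icc a b, HasDerivWithinAt f₁ (M t (f₁ t)) (Icc a b) t)
    (hf₂ : ∀ t ∈ Icc a b, HasDerivWithinAt f₂ (M t (f₂ t)) (Icc a b) t)
    (ha : f₁ a = f₂ a) : EqOn f₁ f₂ (Icc a b) := by
  obtain ⟨K, hK⟩ := isCompact_Icc.exists_nnnorm_bound_of_continuousOn hM
  exact ODE_solution_unique_of_mem_Icc_right (s := fun _ ↦ univ)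
    (fun t ht ↦ ((M t).lipschitz.weaken (hK t (Ico_subset_Icc_self ht))).lipschitzOnWith)
    (fun t ht ↦ (hf₁ t ht).continuousWithinAt)
    (fun t ht ↦ (hf₁ t (Ico_subset_Icc_self ht)).Ici_of_Icc ht) (fun _ _ ↦ trivial)
    (fun t ht ↦ (hf₂ t ht).continuousWithinAt)
    (fun t ht ↦ (hf₂ t (Ico_subset_Icc_self ht)).Ici_of_Icc ht) (fun _ _ ↦ trivial) ha

variable [CompleteSpace E]

theorem exists_linearODE_of_mul_le_half {K : ℝ≥0} (hab : a ≤ b)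
    (hM : ContinuousOn M (Icc a b)) (hK : ∀ t ∈ Icc a b, ‖M t‖₊ ≤ K)
    (hsmall : K * (b - a) ≤ 1 / 2) (x₀ : E) :
    ∃ f : ℝ → E, f a = x₀ ∧ ∀ t ∈ Icc a b, HasDerivWithinAt f (M t (f t)) (Icc a b) t := by
  -- On the ball of radius `‖x₀‖ + 1` the field is bounded by `K (2‖x₀‖ + 1)`.
  have hpl : IsPicardLindelof (fun t x ↦ M t x) (⟨a, le_rfl, hab⟩ : Icc a b) x₀
      (‖x₀‖₊ + 1) 0 (K * (2 * ‖x₀‖₊ + 1)) K := by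
    refine ⟨fun t ht ↦ ((M t).lipschitz.weaken (hK t ht)).lipschitzOnWith,
      fun x _ ↦ hM.clm_apply continuousOn_const, fun t ht x hx ↦ ?_, ?_⟩
    · have hx : ‖x‖ ≤ 2 * ‖x₀‖ + 1 := by
        have := norm_le_norm_add_norm_sub' x x₀
        rw [mem_closedBall_iff_norm] at hx
        push_cast at hx
        linarith
      calc ‖M t x‖ ≤ ‖M t‖ * ‖x‖ := (M t).le_opNorm x
        _ ≤ K * (2 * ‖x₀‖ + 1) :=
          mul_le_mul (hK t ht) hx (norm_nonneg _) K.2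
    · rw [sub_self, max_eq_left (sub_nonneg.2 hab)]
      push_cast
      nlinarith [norm_nonneg x₀]
  exact hpl.exists_eq_forall_mem_Icc_hasDerivWithinAt₀

theorem exists_linearODE (hab : a ≤ b) (hM : ContinuousOn M (Icc a b)) (x₀ : E) :
    ∃ f : ℝ → E, f a = x₀ ∧ ∀ t ∈ Icc a b, HasDerivWithinAt f (M t (f t)) (Icc a b) t := by
  obtain ⟨K, hK⟩ := isCompact_Icc.exists_nnnorm_bound_of_continuousOn hM
  have hshort : ∀ c d, a ≤ c → c ≤ d → d ≤ b → K * (d - c) ≤ 1 / 2 → ∀ y : E,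
      ∃ f : ℝ → E, f c = y ∧ ∀ t ∈ Icc c d, HasDerivWithinAt f (M t (f t)) (Icc c d) t :=
    fun c d hac hcd hdb hsmall ↦
      have hsub : Icc c d ⊆ Icc a b := Icc_subset_Icc hac hdb
      exists_linearODE_of_mul_le_half hcd (hM.mono hsub) (fun t ht ↦ hK t (hsub ht)) hsmall
  -- Induction on the number of pieces of length `1 / (2K)` needed to cover `[c, b]`.
  suffices key : ∀ n : ℕ, ∀ c ∈ Icc a b, K * (b - c) ≤ n / 2 → ∀ y : E,
      ∃ f : ℝ → E, f c = y ∧ ∀ t ∈ Icc c b, HasDerivWithinAt f (M t (f t)) (Icc c b) t from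
    key ⌈2 * K * (b - a)⌉₊ a ⟨le_rfl, hab⟩
      (by linarith [Nat.le_ceil (2 * K * (b - a))]) x₀
  intro n
  induction n with
  | zero =>
    intro c hc hn
    exact hshort c b hc.1 hc.2 le_rfl (by simpa using hn.trans (by norm_num))
  | succ n ih =>
    intro c hc hn y
    by_cases hsmall : K * (b - c) ≤ 1 / 2
    · exact hshort c b hc.1 hc.2 le_rfl hsmall y
    have hKpos : 0 < (K : ℝ) := by
      by_contra! h
      nlinarith [K.2, hc.2]
    set d := c + 1 / (2 * K)
    have hKd : K * (d - c) = 1 / 2 := by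
      simp only [d]
      field_simp
      ring
    have hcd : c ≤ d := le_add_of_nonneg_right (by positivity)
    have hdb : d ≤ b := by nlinarith
    obtain ⟨f₁, hf₁c, hf₁⟩ := hshort c d hc.1 hcd hdb hKd.le y
    obtain ⟨f₂, hf₂d, hf₂⟩ := ih d ⟨hc.1.trans hcd, hdb⟩ (by push_cast at hn; nlinarith) (f₁ d)
    obtain ⟨f, hfc, hf⟩ := exists_hasDerivWithinAt_Icc_of_glue hcd hdb hf₁ hf₂ hf₂d.symm
    exact ⟨f, hfc.trans hf₁c, hf⟩

end LinearODE

section Transport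

open ContinuousLinearMap

variable {g : Type*} [NormedAddCommGroup g] [NormedSpace ℝ g] [FiniteDimensional ℝ g]
  {B : g →ₗ[ℝ] g →ₗ[ℝ] g} {γ : ℝ → g} {A : ℝ → g →L[ℝ] g}

theorem continuous_adL (B : g →ₗ[ℝ] g →ₗ[ℝ] g) : Continuous (adL B) :=
  (LinearMap.toContinuousLinearMap.toLinearMap.comp B).continuous_of_finiteDimensional

theorem isTransport_transport (hγ : ContinuousOn γ (Icc 0 1)) :
    IsTransport B γ (transport B γ) := by
  have hM : ContinuousOn (fun t ↦ compL ℝ g g g (adL B (γ t))) (Icc 0 1) :=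
    ((compL ℝ g g g).continuous.comp (continuous_adL B)).comp_continuousOn hγ
  obtain ⟨A, hA0, hA⟩ := exists_linearODE zero_le_one hM 1
  have hex : ∃ A, IsTransport B γ A := ⟨A, hA0, hA,
    ((continuous_adL B).comp_continuousOn hγ).clm_comp fun t ht ↦ (hA t ht).continuousWithinAt⟩
  rw [transport, dif_pos hex]
  exact hex.choose_spec

theorem IsTransport.continuousOn (hA : IsTransport B γ A) : ContinuousOn A (Icc 0 1) :=
  fun t ht ↦ (hA.2.1 t ht).continuousWithinAt

theorem IsTransport.isUnit (hA : IsTransport B γ A) (hγ : ContinuousOn γ (Icc 0 1))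
    {t : ℝ} (ht : t ∈ Icc (0 : ℝ) 1) : IsUnit (A t) := by
  have hM : ContinuousOn (fun t ↦ -(compL ℝ g g g).flip (adL B (γ t))) (Icc 0 1) :=
    ((compL ℝ g g g).flip.continuous.comp (continuous_adL B)).neg.comp_continuousOn hγ
  obtain ⟨C, hC0, hC⟩ := exists_linearODE zero_le_one hM 1
  -- `C' = -C ∘ ad γ` makes `C * A` constant.
  have hCA : ∀ t ∈ Icc (0 : ℝ) 1, HasDerivWithinAt (C * A) 0 (Icc 0 1) t := fun t ht ↦
    ((hC t ht).mul (hA.2.1 t ht)).congr_deriv <| by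
      simp only [neg_apply, flip_apply, compL_apply, ← mul_def, neg_mul, mul_assoc,
        neg_add_cancel]
  have hconst := constant_of_has_deriv_right_zero
    (fun t ht ↦ (hCA t ht).continuousWithinAt)
    (fun t ht ↦ (hCA t (Ico_subset_Icc_self ht)).Ici_of_Icc ht) t ht
  rw [Pi.mul_apply, Pi.mul_apply, hC0, hA.1, one_mul] at hconst
  exact ⟨⟨A t, C t, mul_eq_one_comm.mp hconst, hconst⟩, rfl⟩

theorem IsTransport.continuousOn_inverse (hA : IsTransport B γ A)
    (hγ : ContinuousOn γ (Icc 0 1)) : ContinuousOn (fun t ↦ Ring.inverse (A t)) (Icc 0 1) :=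
  fun t ht ↦ by
    have := NormedRing.inverse_continuousAt (hA.isUnit hγ ht).unit
    rw [IsUnit.unit_spec] at this
    exact this.comp_continuousWithinAt (hA.continuousOn t ht)

variable {h : Type*} [NormedAddCommGroup h] [NormedSpace ℝ h] [FiniteDimensional ℝ h]
  {B' : h →ₗ[ℝ] h →ₗ[ℝ] h} {φ : g →ₗ[ℝ] h} {A' : ℝ → h →L[ℝ] h}

theorem IsTransport.comp_eq_comp (hφ : ∀ x y : g, φ (B x y) = B' (φ x) (φ y))
    (hγ : ContinuousOn γ (Icc 0 1)) (hA : IsTransport B γ A)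
    (hA' : IsTransport B' (fun t ↦ φ (γ t)) A') {t : ℝ} (ht : t ∈ Icc (0 : ℝ) 1) :
    (A' t).comp (LinearMap.toContinuousLinearMap φ)
      = (LinearMap.toContinuousLinearMap φ).comp (A t) := by
  set φL := LinearMap.toContinuousLinearMap φ
  have hφL : ∀ x, φL.comp (adL B x) = (adL B' (φ x)).comp φL := fun x ↦ by
    ext y
    exact hφ x y
  -- Both sides solve `X' = ad (φ (γ t)) ∘ X` with `X 0 = φ`.
  have hM : ContinuousOn (fun t ↦ compL ℝ g h h (adL B' (φ (γ t)))) (Icc 0 1) :=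
    ((compL ℝ g h h).continuous.comp
      ((continuous_adL B').comp φL.continuous)).comp_continuousOn hγ
  refine eqOn_of_linearODE (f₁ := fun t ↦ (A' t).comp φL) (f₂ := fun t ↦ φL.comp (A t)) hM
    (fun t ht ↦ ?_) (fun t ht ↦ ?_) ?_ ht
  · refine (((compL ℝ g h h).flip φL).hasFDerivAt.comp_hasDerivWithinAt t
      (hA'.2.1 t ht)).congr_deriv ?_
    rw [compL_apply, flip_apply, compL_apply, comp_assoc]
  · refine ((compL ℝ g g h φL).hasFDerivAt.comp_hasDerivWithinAt t (hA.2.1 t ht)).congr_deriv ?_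
    rw [compL_apply, compL_apply, ← comp_assoc, hφL, comp_assoc]
  · simp [hA.1, hA'.1, one_def]

theorem transport_map_apply (hφ : ∀ x y : g, φ (B x y) = B' (φ x) (φ y))
    (hγ : ContinuousOn γ (Icc 0 1)) {t : ℝ} (ht : t ∈ Icc (0 : ℝ) 1) (x : g) :
    transport B' (fun s ↦ φ (γ s)) t (φ x) = φ (transport B γ t x) :=
  congr($((isTransport_transport hγ).comp_eq_comp hφ hγ
    (isTransport_transport (φ.continuous_of_finiteDimensional.comp_continuousOn hγ)) ht) x)

theorem inverse_transport_map_apply (hφ : ∀ x y : g, φ (B x y) = B' (φ x) (φ y))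
    (hγ : ContinuousOn γ (Icc 0 1)) {t : ℝ} (ht : t ∈ Icc (0 : ℝ) 1) (x : g) :
    Ring.inverse (transport B' (fun s ↦ φ (γ s)) t) (φ x)
      = φ (Ring.inverse (transport B γ t) x) := by
  have hφγ : ContinuousOn (fun s ↦ φ (γ s)) (Icc 0 1) :=
    φ.continuous_of_finiteDimensional.comp_continuousOn hγ
  obtain ⟨u, hu⟩ := (isTransport_transport hγ).isUnit hγ ht
  obtain ⟨u', hu'⟩ := (isTransport_transport hφγ).isUnit hφγ ht
  have hx : x = (↑u : g →L[ℝ] g) ((↑u⁻¹ : g →L[ℝ] g) x) := congr($(u.mul_inv) x).symm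
  have hinv : ∀ y, (↑u'⁻¹ : h →L[ℝ] h) ((↑u' : h →L[ℝ] h) y) = y :=
    fun y ↦ congr($(u'.inv_mul) y)
  rw [← hu, ← hu', Ring.inverse_unit, Ring.inverse_unit]
  calc (↑u'⁻¹ : h →L[ℝ] h) (φ x)
        = (↑u'⁻¹ : h →L[ℝ] h) (φ ((↑u : g →L[ℝ] g) ((↑u⁻¹ : g →L[ℝ] g) x))) := by rw [← hx]
    _ = (↑u'⁻¹ : h →L[ℝ] h) ((↑u' : h →L[ℝ] h) (φ ((↑u⁻¹ : g →L[ℝ] g) x))) := by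
        rw [hu', hu, transport_map_apply hφ hγ ht]
    _ = φ ((↑u⁻¹ : g →L[ℝ] g) x) := hinv _

end Transport

section Paths

theorem continuousOn_pathExt {E : Type*} [TopologicalSpace E] (γ : C(Icc (0 : ℝ) 1, E)) :
    ContinuousOn (pathExt γ) (Icc 0 1) :=
  γ.continuous.Icc_extend'.continuousOn

variable {g : Type*} [NormedAddCommGroup g] [NormedSpace ℝ g] [FiniteDimensional ℝ g]
  {h : Type*} [NormedAddCommGroup h] [NormedSpace ℝ h] [FiniteDimensional ℝ h]
  {B : g →ₗ[ℝ] g →ₗ[ℝ] g} {B' : h →ₗ[ℝ] h →ₗ[ℝ] h} {φ : g →ₗ[ℝ] h}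

theorem pathMap_apply (γ : C(Icc (0 : ℝ) 1, g)) (t : Icc (0 : ℝ) 1) :
    pathMap φ γ t = φ (γ t) :=
  rfl

theorem pathExt_pathMap (γ : C(Icc (0 : ℝ) 1, g)) :
    pathExt (pathMap φ γ) = fun t ↦ φ (pathExt γ t) :=
  rfl

theorem continuous_pathMul (B : g →ₗ[ℝ] g →ₗ[ℝ] g) (γ δ : C(Icc (0 : ℝ) 1, g)) :
    Continuous (pathMul B γ δ) :=
  γ.continuous.add <|
    ((isTransport_transport (continuousOn_pathExt γ)).continuousOn.comp_continuous
      continuous_subtype_val Subtype.prop).clm_apply δ.continuous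

theorem map_pathMul (hφ : ∀ x y : g, φ (B x y) = B' (φ x) (φ y)) (γ δ : C(Icc (0 : ℝ) 1, g))
    (t : Icc (0 : ℝ) 1) : φ (pathMul B γ δ t) = pathMul B' (pathMap φ γ) (pathMap φ δ) t := by
  simp only [pathMul, pathMap_apply, pathExt_pathMap, map_add]
  rw [transport_map_apply hφ (continuousOn_pathExt γ) t.2]

theorem map_pathInv (hφ : ∀ x y : g, φ (B x y) = B' (φ x) (φ y)) (γ : C(Icc (0 : ℝ) 1, g))
    (t : Icc (0 : ℝ) 1) : φ (pathInv B γ t) = pathInv B' (pathMap φ γ) t := by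
  simp only [pathInv, pathMap_apply, pathExt_pathMap, map_neg]
  rw [inverse_transport_map_apply hφ (continuousOn_pathExt γ) t.2]

theorem InPathZero.map (hφ : ∀ x y : g, φ (B x y) = B' (φ x) (φ y)) {γ : C(Icc (0 : ℝ) 1, g)}
    (hγ : InPathZero B γ) : InPathZero B' (pathMap φ γ) := by
  obtain ⟨Γ, Γ', hΓ, hΓ'c, hΓ0, hΓ1, hint⟩ := hγ
  let φL := LinearMap.toContinuousLinearMap φ
  let L : C(Icc (0 : ℝ) 1, g) →L[ℝ] C(Icc (0 : ℝ) 1, h) :=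
    ContinuousLinearMap.compLeftContinuous ℝ _ φL
  refine ⟨fun s ↦ L (Γ s), fun s ↦ L (Γ' s),
    fun s hs ↦ L.hasFDerivAt.comp_hasDerivWithinAt s (hΓ s hs),
    L.continuous.comp_continuousOn hΓ'c, by simp only [hΓ0, map_zero], congrArg L hΓ1,
    fun s hs ↦ ?_⟩
  have hcont : ContinuousOn
      (fun t ↦ Ring.inverse (transport B (pathExt (Γ s)) t) (pathExt (Γ' s) t)) (Icc 0 1) :=
    ((isTransport_transport (continuousOn_pathExt (Γ s))).continuousOn_inverse
      (continuousOn_pathExt (Γ s))).clm_apply (continuousOn_pathExt (Γ' s))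
  calc ∫ t in (0 : ℝ)..1,
          Ring.inverse (transport B' (pathExt (L (Γ s))) t) (pathExt (L (Γ' s)) t)
      = ∫ t in (0 : ℝ)..1,
          φL (Ring.inverse (transport B (pathExt (Γ s)) t) (pathExt (Γ' s) t)) :=
        intervalIntegral.integral_congr fun t ht ↦ inverse_transport_map_apply hφ
          (continuousOn_pathExt (Γ s)) (by rwa [uIcc_of_le zero_le_one] at ht) _
    _ = φL (∫ t in (0 : ℝ)..1,
          Ring.inverse (transport B (pathExt (Γ s)) t) (pathExt (Γ' s) t)) :=
        φL.intervalIntegral_comp_comm (hcont.intervalIntegrable_of_Icc zero_le_one)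
    _ = 0 := by rw [hint s hs, map_zero]

theorem pathRel.map (hφ : ∀ x y : g, φ (B x y) = B' (φ x) (φ y)) {γ δ : C(Icc (0 : ℝ) 1, g)}
    (hγδ : pathRel B γ δ) : pathRel B' (pathMap φ γ) (pathMap φ δ) := by
  obtain ⟨ι, m, hι, hm, hm₀⟩ := hγδ
  refine ⟨pathMap φ ι, pathMap φ m, fun t ↦ ?_, fun t ↦ ?_, hm₀.map hφ⟩
  · exact (congrArg φ (hι t)).trans (map_pathInv hφ δ t)
  · exact (congrArg φ (hm t)).trans (map_pathMul hφ γ ι t)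

end Paths

theorem pathMap_descends_general {g h : Type*}
    [NormedAddCommGroup g] [NormedSpace ℝ g] [FiniteDimensional ℝ g]
    [NormedAddCommGroup h] [NormedSpace ℝ h] [FiniteDimensional ℝ h]
    (B : g →ₗ[ℝ] g →ₗ[ℝ] g)
    (B' : h →ₗ[ℝ] h →ₗ[ℝ] h)
    (φ : g →ₗ[ℝ] h) (hφ : ∀ x y : g, φ (B x y) = B' (φ x) (φ y)) :
    -- `γ ↦ φ∘γ` maps `P(g)₀` into `P(h)₀` ...
    (∀ γ : C(Set.Icc (0:ℝ) 1, g), InPathZero B γ → InPathZero B' (pathMap φ γ)) ∧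
    -- ... and therefore descends to a group homomorphism of the quotients
    ∃ F : Quot (pathRel B) → Quot (pathRel B'),
      (∀ γ : C(Set.Icc (0:ℝ) 1, g),
        F (Quot.mk (pathRel B) γ) = Quot.mk (pathRel B') (pathMap φ γ)) ∧
      (∀ (mulg : Quot (pathRel B) → Quot (pathRel B) → Quot (pathRel B))
         (mulh : Quot (pathRel B') → Quot (pathRel B') → Quot (pathRel B')),
        (∀ γ δ m : C(Set.Icc (0:ℝ) 1, g), (∀ t, m t = pathMul B γ δ t) →
          mulg (Quot.mk (pathRel B) γ) (Quot.mk (pathRel B) δ) = Quot.mk (pathRel B) m) →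
        (∀ γ δ m : C(Set.Icc (0:ℝ) 1, h), (∀ t, m t = pathMul B' γ δ t) →
          mulh (Quot.mk (pathRel B') γ) (Quot.mk (pathRel B') δ) = Quot.mk (pathRel B') m) →
        ∀ a b : Quot (pathRel B), F (mulg a b) = mulh (F a) (F b)) := by
  refine ⟨fun γ ↦ InPathZero.map hφ,
    Quot.lift (fun γ ↦ Quot.mk _ (pathMap φ γ)) fun γ δ hγδ ↦ Quot.sound (hγδ.map hφ),
    fun γ ↦ rfl, fun mulg mulh hmulg hmulh a b ↦ ?_⟩
  induction a using Quot.ind with | mk γ =>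
  induction b using Quot.ind with | mk δ =>
  let m : C(Icc (0 : ℝ) 1, g) := ⟨pathMul B γ δ, continuous_pathMul B γ δ⟩
  rw [hmulg γ δ m fun _ ↦ rfl, hmulh _ _ (pathMap φ m) (map_pathMul hφ γ δ)]

/-- A homomorphism `φ : g → h` of finite-dimensional real Lie algebras induces a
group homomorphism `P(g) → P(h)`, `γ ↦ φ∘γ`, which maps `P(g)₀` into `P(h)₀` and
therefore descends to a group homomorphism `P(g)/P(g)₀ → P(h)/P(h)₀`. -/
theorem pathMap_descends {g h : Type*}
    [NormedAddCommGroup g] [NormedSpace ℝ g] [FiniteDimensional ℝ g]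
    [NormedAddCommGroup h] [NormedSpace ℝ h] [FiniteDimensional ℝ h]
    (B : g →ₗ[ℝ] g →ₗ[ℝ] g) (hB : IsLieBracket B)
    (B' : h →ₗ[ℝ] h →ₗ[ℝ] h) (hB' : IsLieBracket B')
    (φ : g →ₗ[ℝ] h) (hφ : ∀ x y : g, φ (B x y) = B' (φ x) (φ y)) :
    -- `γ ↦ φ∘γ` maps `P(g)₀` into `P(h)₀` ...
    (∀ γ : C(Set.Icc (0:ℝ) 1, g), InPathZero B γ → InPathZero B' (pathMap φ γ)) ∧
    -- ... and therefore descends to a group homomorphism of the quotients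
    ∃ F : Quot (pathRel B) → Quot (pathRel B'),
      (∀ γ : C(Set.Icc (0:ℝ) 1, g),
        F (Quot.mk (pathRel B) γ) = Quot.mk (pathRel B') (pathMap φ γ)) ∧
      (∀ (mulg : Quot (pathRel B) → Quot (pathRel B) → Quot (pathRel B))
         (mulh : Quot (pathRel B') → Quot (pathRel B') → Quot (pathRel B')),
        (∀ γ δ m : C(Set.Icc (0:ℝ) 1, g), (∀ t, m t = pathMul B γ δ t) →
          mulg (Quot.mk (pathRel B) γ) (Quot.mk (pathRel B) δ) = Quot.mk (pathRel B) m) →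
        (∀ γ δ m : C(Set.Icc (0:ℝ) 1, h), (∀ t, m t = pathMul B' γ δ t) →
          mulh (Quot.mk (pathRel B') γ) (Quot.mk (pathRel B') δ) = Quot.mk (pathRel B') m) →
        ∀ a b : Quot (pathRel B), F (mulg a b) = mulh (F a) (F b)) :=
  pathMap_descends_general B B' φ hφ
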